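/- arXiv:1303.5993 — 3 statements merged into one kernel-verified Lean document; each statement's English description precedes it below -/
import Mathlib

section
/- (Marstrand slicing theorem) Let C ⊆ ℝ^m × ℝ^l, let α > 0 and β > 0. Assume the projection Proj_A(C) = {a ∈ ℝ^m : ∃ b, (a,b) ∈ C} has Hausdorff dimension at least α, and that for every a ∈ Proj_A(C) the slice B_a = {b ∈ ℝ^l : (a,b) ∈ C} has Hausdorff dimension at least β. Then dim_H(C) ≥ α + β. -/
/-!
Marstrand's slicing argument, with Hausdorff content in place of Frostman measures. Fix
`s < s' < dim_H (π C)` and `t < dim_H` of the slices. By countable subadditivity some set `S` of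
positive `s'`-content has slices of `t`-content at least some `b > 0`. Given a cover of `C` by
sets `U i` of diameter `dᵢ ≤ 1`, charge `dᵢ ^ t` to each of the at most `3 ^ m` dyadic cubes of
side about `dᵢ` that meet the projection of `U i`. The slices of the `U i` cover the slice over
`a`, so the cubes containing a point `a ∈ S` carry total charge at least `b`, hence at some scale
`k` the cube containing `a` carries charge at least `b η ρ ^ k`, with `ρ = 2 ^ (s - s')` and
`∑ η ρ ^ k < 1`. Covering `S` by these heavy cubes bounds its `s'`-content by a constant times
`b⁻¹ ∑ dᵢ ^ (s + t)`, so `μH[s + t] C > 0`.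
-/

open scoped ENNReal NNReal
open Set MeasureTheory Metric

section HausdorffContent

variable {X : Type*} [PseudoEMetricSpace X]

noncomputable def hausdorffContent (d : ℝ) : OuterMeasure X :=
  OuterMeasure.ofFunction (fun E => ⨆ _ : E.Nonempty, ediam E ^ d) (by simp)

theorem hausdorffContent_le_ediam_rpow (d : ℝ) (E : Set X) :
    hausdorffContent d E ≤ ediam E ^ d :=
  (OuterMeasure.ofFunction_le _).trans (iSup_le fun _ => le_rfl)

theorem hausdorffContent_le_tsum {κ : Type*} [Countable κ] (d : ℝ) {S : Set X}
    {U : κ → Set X} (hU : S ⊆ ⋃ i, U i) : hausdorffContent d S ≤ ∑' i, ediam (U i) ^ d :=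
  (measure_mono hU).trans <| (measure_iUnion_le _).trans <|
    ENNReal.tsum_le_tsum fun i => hausdorffContent_le_ediam_rpow d (U i)

end HausdorffContent

section HausdorffMeasure

variable {X : Type*} [EMetricSpace X]

theorem hausdorffMeasure_eq_zero_of_hausdorffContent_eq_zero [MeasurableSpace X] [BorelSpace X]
    {d : ℝ} (hd : 0 < d) {S : Set X} (h : hausdorffContent d S = 0) : μH[d] S = 0 := by
  refine le_antisymm ?_ bot_le
  rw [Measure.hausdorffMeasure_apply]
  refine iSup₂_le fun r hr => ENNReal.le_of_forall_pos_le_add fun ε hε _ => ?_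
  have hsmall : 0 < min (ε : ℝ≥0∞) (min r 1 ^ d) :=
    lt_min (by exact_mod_cast hε) (ENNReal.rpow_pos (lt_min hr one_pos) (by simp))
  obtain ⟨U, hSU, hU⟩ : ∃ U : ℕ → Set X, S ⊆ ⋃ n, U n ∧
      ∑' n, ⨆ _ : (U n).Nonempty, ediam (U n) ^ d < min (ε : ℝ≥0∞) (min r 1 ^ d) := by
    have hlt := h ▸ hsmall
    simp only [hausdorffContent, OuterMeasure.ofFunction_apply, iInf_lt_iff, exists_prop] at hlt
    exact hlt
  have hUr : ∀ n, ediam (U n) ≤ r := by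
    intro n
    rcases (U n).eq_empty_or_nonempty with hn | hn
    · simp [hn]
    have : ediam (U n) ^ d < min r 1 ^ d :=
      calc ediam (U n) ^ d = ⨆ _ : (U n).Nonempty, ediam (U n) ^ d := by simp [hn]
        _ ≤ _ := ENNReal.le_tsum n
        _ < _ := hU.trans_le (min_le_right _ _)
    exact ((ENNReal.rpow_lt_rpow_iff hd).1 this).le.trans (min_le_left _ _)
  rw [zero_add]
  exact iInf₂_le_of_le U hSU (iInf_le_of_le hUr (hU.le.trans (min_le_left _ _)))

theorem le_hausdorffMeasure_of_forall_covers [MeasurableSpace X] [BorelSpace X] {d : ℝ}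
    (hd : 0 < d) {S : Set X} {c : ℝ≥0∞}
    (h : ∀ U : ℕ → Set X, S ⊆ ⋃ n, U n → (∀ n, ediam (U n) ≤ 1) →
      c ≤ ∑' n, ediam (U n) ^ d) :
    c ≤ μH[d] S := by
  rw [Measure.hausdorffMeasure_apply]
  refine le_iSup₂_of_le 1 one_pos (le_iInf₂ fun U hSU => le_iInf fun hU => ?_)
  refine (h U hSU hU).trans_eq (tsum_congr fun n => ?_)
  rcases (U n).eq_empty_or_nonempty with hn | hn
  · simp [hn, ENNReal.zero_rpow_of_pos hd]
  · simp [hn]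

theorem hausdorffContent_ne_zero_of_lt_dimH {d : ℝ} (hd : 0 < d) {S : Set X}
    (h : ENNReal.ofReal d < dimH S) : hausdorffContent d S ≠ 0 := by
  borelize X
  intro h0
  have htop := hausdorffMeasure_of_lt_dimH h
  rw [Real.coe_toNNReal d hd.le, hausdorffMeasure_eq_zero_of_hausdorffContent_eq_zero hd h0] at htop
  exact ENNReal.zero_ne_top htop

end HausdorffMeasure

theorem Real.edist_le_inv_two_pow_iff {a b : ℝ} {k : ℕ} :
    edist a b ≤ 2⁻¹ ^ k ↔ |2 ^ k * a - 2 ^ k * b| ≤ 1 := by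
  have h2k : (0 : ℝ) < 2 ^ k := by positivity
  rw [edist_dist, Real.dist_eq, ← mul_sub, abs_mul, abs_of_pos h2k, ← le_div_iff₀' h2k,
    ← ENNReal.ofReal_le_ofReal_iff (by positivity)]
  congr! 1
  rw [ENNReal.ofReal_div_of_pos h2k]
  simp [ENNReal.inv_pow]

theorem Int.floor_mem_Icc_of_abs_sub_le_one {a b : ℝ} (h : |a - b| ≤ 1) :
    ⌊a⌋ ∈ Finset.Icc (⌊b⌋ - 1) (⌊b⌋ + 1) := by
  rw [abs_le] at h
  rw [Finset.mem_Icc, ← Int.floor_sub_one, ← Int.floor_add_one]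
  exact ⟨Int.floor_mono (by linarith), Int.floor_mono (by linarith)⟩

theorem ENNReal.exists_inv_two_pow_near {r : ℝ≥0∞} (h1 : r ≤ 1) :
    ∃ k : ℕ, r ≤ 2⁻¹ ^ k ∧ (r ≠ 0 → 2⁻¹ ^ k ≤ 2 * r) := by
  rcases eq_or_ne r 0 with rfl | h0
  · exact ⟨0, bot_le, fun h => (h rfl).elim⟩
  lift r to ℝ≥0 using ne_top_of_le_ne_top ENNReal.one_ne_top h1
  have hr : 0 < r := pos_iff_ne_zero.2 (by exact_mod_cast h0)
  obtain ⟨k, hk, hk'⟩ := exists_nat_pow_near (x := r⁻¹) (y := (2 : ℝ≥0))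
    ((one_le_inv₀ hr).2 (by exact_mod_cast h1)) _root_.one_lt_two
  have hcast : (((2 : ℝ≥0) ^ k)⁻¹ : ℝ≥0) = (2⁻¹ : ℝ≥0∞) ^ k := by
    rw [ENNReal.coe_inv (by positivity), ENNReal.coe_pow, ENNReal.inv_pow, ENNReal.coe_ofNat]
  refine ⟨k, ?_, fun _ => ?_⟩
  · rw [← hcast, ENNReal.coe_le_coe]
    exact (le_inv_comm₀ (by positivity) hr).1 hk
  · rw [← hcast, ← ENNReal.coe_ofNat, ← ENNReal.coe_mul, ENNReal.coe_le_coe,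
      inv_le_iff_one_le_mul₀ (by positivity), mul_right_comm, ← pow_succ']
    exact (inv_le_iff_one_le_mul₀ hr).1 hk'.le

section Dyadic

variable {ι : Type*}

noncomputable def dyadicIndex (k : ℕ) (x : EuclideanSpace ℝ ι) : ι → ℤ :=
  fun j => ⌊2 ^ k * x j⌋

def dyadicCube (k : ℕ) (z : ι → ℤ) : Set (EuclideanSpace ℝ ι) := dyadicIndex k ⁻¹' {z}

variable [Fintype ι]

theorem ediam_dyadicCube_le (k : ℕ) (z : ι → ℤ) :
    ediam (dyadicCube k z) ≤ (Fintype.card ι : ℝ≥0∞) ^ (1 / 2 : ℝ) * 2⁻¹ ^ k := by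
  refine ediam_le fun x hx y hy => ?_
  have hcoord : edist (WithLp.ofLp x) (WithLp.ofLp y) ≤ 2⁻¹ ^ k := by
    refine edist_pi_le_iff.2 fun j => Real.edist_le_inv_two_pow_iff.2 ?_
    exact (Int.abs_sub_lt_one_of_floor_eq_floor (congrFun (hx.trans hy.symm) j)).le
  calc edist x y ≤ _ := PiLp.antilipschitzWith_ofLp 2 _ x y
    _ ≤ _ := by
      gcongr
      rw [ENNReal.coe_rpow_of_nonneg _ (by norm_num)]
      norm_num

theorem hausdorffContent_dyadicCube_le (k : ℕ) (z : ι → ℤ) {d : ℝ} (hd : 0 ≤ d) :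
    hausdorffContent d (dyadicCube k z) ≤
      ((Fintype.card ι : ℝ≥0∞) ^ (1 / 2 : ℝ)) ^ d * ((2⁻¹ : ℝ≥0∞) ^ k) ^ d := by
  rw [← ENNReal.mul_rpow_of_nonneg _ _ hd]
  exact (hausdorffContent_le_ediam_rpow d _).trans
    (ENNReal.rpow_le_rpow (ediam_dyadicCube_le k z) hd)

theorem encard_image_dyadicIndex_le {k : ℕ} {E : Set (EuclideanSpace ℝ ι)}
    (hE : ediam E ≤ 2⁻¹ ^ k) : (dyadicIndex k '' E).encard ≤ 3 ^ Fintype.card ι := by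
  classical
  rcases E.eq_empty_or_nonempty with rfl | ⟨x₀, hx₀⟩
  · simp
  set box := Fintype.piFinset fun j =>
    Finset.Icc (dyadicIndex k x₀ j - 1) (dyadicIndex k x₀ j + 1)
  have hsub : dyadicIndex k '' E ⊆ box := by
    rintro _ ⟨x, hx, rfl⟩
    rw [Finset.mem_coe, Fintype.mem_piFinset]
    refine fun j => Int.floor_mem_Icc_of_abs_sub_le_one (Real.edist_le_inv_two_pow_iff.1 ?_)
    exact (PiLp.edist_apply_le x x₀ j).trans ((edist_le_ediam_of_mem hx hx₀).trans hE)
  have h3 : ∀ c : ℤ, (c + 1 + 1 - (c - 1)).toNat = 3 := fun c => by omega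
  calc (dyadicIndex k '' E).encard ≤ (box : Set (ι → ℤ)).encard := encard_le_encard hsub
    _ = 3 ^ Fintype.card ι := by
      rw [Set.encard_coe_eq_coe_finsetCard, Fintype.card_piFinset]
      simp [h3]

theorem exists_hausdorffContent_le_tsum_dyadic_weight {s s' : ℝ} (hs : 0 ≤ s) (hss' : s < s') :
    ∃ K : ℝ≥0∞, K ≠ ∞ ∧ ∀ (S : Set (EuclideanSpace ℝ ι)) (w : ℕ → (ι → ℤ) → ℝ≥0∞),
      (∀ a ∈ S, 1 ≤ ∑' k, w k (dyadicIndex k a)) →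
      hausdorffContent s' S ≤ K * ∑' k, ∑' z, w k z * (2⁻¹ ^ k) ^ s := by
  have hs' : 0 ≤ s' := hs.trans hss'.le
  set ρ : ℝ≥0∞ := 2⁻¹ ^ (s' - s)
  have hρ : ρ < 1 := ENNReal.rpow_lt_one (by norm_num) (sub_pos.2 hss')
  have h1ρ : 1 - ρ ≠ 0 := (tsub_pos_of_lt hρ).ne'
  set η : ℝ≥0∞ := (1 - ρ) / 2
  have hη : η ≠ 0 := ENNReal.div_ne_zero.2 ⟨h1ρ, ENNReal.ofNat_ne_top⟩
  have hηt : η ≠ ∞ := ENNReal.div_ne_top (ENNReal.sub_ne_top ENNReal.one_ne_top) two_ne_zero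
  set c : ℝ≥0∞ := ((Fintype.card ι : ℝ≥0∞) ^ (1 / 2 : ℝ)) ^ s'
  have hc : c ≠ ∞ := ENNReal.rpow_ne_top_of_nonneg hs'
    (ENNReal.rpow_ne_top_of_nonneg (by norm_num) (ENNReal.natCast_ne_top _))
  refine ⟨c * η⁻¹, ENNReal.mul_ne_top hc (ENNReal.inv_ne_top.2 hη), fun S w hw => ?_⟩
  have hsum : ∑' k, η * ρ ^ k < 1 := by
    rw [ENNReal.tsum_mul_left, ENNReal.tsum_geometric]
    change (1 - ρ) / 2 * (1 - ρ)⁻¹ < 1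
    rw [div_eq_mul_inv, mul_right_comm,
      ENNReal.mul_inv_cancel h1ρ (ENNReal.sub_ne_top ENNReal.one_ne_top), one_mul]
    exact ENNReal.inv_lt_one.2 ENNReal.one_lt_two
  set heavy : ℕ → (ι → ℤ) → Set (EuclideanSpace ℝ ι) := fun k z =>
    if η * ρ ^ k ≤ w k z then dyadicCube k z else ∅
  have hcover : S ⊆ ⋃ k, ⋃ z, heavy k z := fun a ha => by
    obtain ⟨k, hk⟩ : ∃ k, η * ρ ^ k ≤ w k (dyadicIndex k a) := by
      by_contra! h
      exact (hw a ha).not_gt ((ENNReal.tsum_le_tsum fun k => (h k).le).trans_lt hsum)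
    exact mem_iUnion₂.2 ⟨k, dyadicIndex k a, by simp only [heavy, if_pos hk]; rfl⟩
  -- `ρ ^ k` converts the `s'`-cost of a cube of side `2⁻¹ ^ k` into its `s`-cost
  have hheavy : ∀ k z, hausdorffContent s' (heavy k z) ≤ c * η⁻¹ * (w k z * (2⁻¹ ^ k) ^ s) := by
    intro k z
    by_cases hkz : η * ρ ^ k ≤ w k z
    · have hsplit : ((2⁻¹ : ℝ≥0∞) ^ k) ^ s' = (2⁻¹ ^ k) ^ s * ρ ^ k := by
        rw [← ENNReal.rpow_mul_natCast, mul_comm (s' - s), ENNReal.rpow_natCast_mul,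
          ← ENNReal.rpow_add _ _ (by simp) (by simp), add_sub_cancel]
      calc hausdorffContent s' (heavy k z) ≤ c * ((2⁻¹ ^ k) ^ s * ρ ^ k) := by
            simpa only [heavy, if_pos hkz, hsplit] using hausdorffContent_dyadicCube_le k z hs'
        _ ≤ c * ((2⁻¹ ^ k) ^ s * (η⁻¹ * w k z)) := by
            gcongr
            exact (ENNReal.mul_le_iff_le_inv hη hηt).1 hkz
        _ = c * η⁻¹ * (w k z * (2⁻¹ ^ k) ^ s) := by ring
    · simp [heavy, if_neg hkz]
  calc hausdorffContent s' S ≤ ∑' k, ∑' z, hausdorffContent s' (heavy k z) :=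
        (measure_mono hcover).trans <| (measure_iUnion_le _).trans <|
          ENNReal.tsum_le_tsum fun k => measure_iUnion_le _
    _ ≤ ∑' k, ∑' z, c * η⁻¹ * (w k z * (2⁻¹ ^ k) ^ s) :=
        ENNReal.tsum_le_tsum fun k => ENNReal.tsum_le_tsum (hheavy k)
    _ = c * η⁻¹ * ∑' k, ∑' z, w k z * (2⁻¹ ^ k) ^ s := by simp_rw [ENNReal.tsum_mul_left]

end Dyadic

section CoverWeight

variable {ι Y : Type*} [Fintype ι] [PseudoEMetricSpace Y]

open Classical in
noncomputable def dyadicCoverWeight (U : ℕ → Set (EuclideanSpace ℝ ι × Y)) (scale : ℕ → ℕ) (t : ℝ)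
    (k : ℕ) (z : ι → ℤ) : ℝ≥0∞ :=
  ∑' i, if scale i = k ∧ z ∈ dyadicIndex k '' (Prod.fst '' U i) then ediam (U i) ^ t else 0

theorem hausdorffContent_slice_le_tsum_dyadicCoverWeight {C : Set (EuclideanSpace ℝ ι × Y)}
    {U : ℕ → Set (EuclideanSpace ℝ ι × Y)} (hCU : C ⊆ ⋃ i, U i) (scale : ℕ → ℕ) {t : ℝ}
    (ht : 0 < t) (a : EuclideanSpace ℝ ι) :
    hausdorffContent t {y | (a, y) ∈ C} ≤
      ∑' k, dyadicCoverWeight U scale t k (dyadicIndex k a) := by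
  classical
  have hcover : {y | (a, y) ∈ C} ⊆ ⋃ i, {y | (a, y) ∈ U i} := fun y hy => by
    simpa using hCU hy
  have hpiece : ∀ i, ediam {y | (a, y) ∈ U i} ^ t ≤ ∑' k,
      if scale i = k ∧ dyadicIndex k a ∈ dyadicIndex k '' (Prod.fst '' U i)
      then ediam (U i) ^ t else 0 := by
    intro i
    rcases {y | (a, y) ∈ U i}.eq_empty_or_nonempty with h | ⟨y, hy⟩
    · simp [h, ENNReal.zero_rpow_of_pos ht]
    refine le_trans ?_ (ENNReal.le_tsum (scale i))
    rw [if_pos ⟨rfl, mem_image_of_mem _ ⟨(a, y), hy, rfl⟩⟩]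
    have hsub : {y | (a, y) ∈ U i} ⊆ Prod.snd '' U i := fun y hy => ⟨(a, y), hy, rfl⟩
    gcongr
    exact (ediam_mono hsub).trans (by simpa using LipschitzWith.prod_snd.ediam_image_le (U i))
  calc hausdorffContent t {y | (a, y) ∈ C} ≤ ∑' i, ediam {y | (a, y) ∈ U i} ^ t :=
        hausdorffContent_le_tsum t hcover
    _ ≤ _ := ENNReal.tsum_le_tsum hpiece
    _ = _ := ENNReal.tsum_comm

theorem tsum_dyadicCoverWeight_le {U : ℕ → Set (EuclideanSpace ℝ ι × Y)} {scale : ℕ → ℕ} {s t : ℝ}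
    (hs : 0 ≤ s) (ht : 0 < t) (hscale : ∀ i, ediam (U i) ≤ 2⁻¹ ^ scale i)
    (hscale' : ∀ i, ediam (U i) ≠ 0 → 2⁻¹ ^ scale i ≤ 2 * ediam (U i)) :
    ∑' k, ∑' z, dyadicCoverWeight U scale t k z * (2⁻¹ ^ k) ^ s ≤
      3 ^ Fintype.card ι * 2 ^ s * ∑' i, ediam (U i) ^ (s + t) := by
  classical
  set A : ℕ → Set (ι → ℤ) := fun i => dyadicIndex (scale i) '' (Prod.fst '' U i)
  have hA : ∀ i, (A i).encard ≤ 3 ^ Fintype.card ι := fun i =>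
    encard_image_dyadicIndex_le <| (LipschitzWith.prod_fst.ediam_image_le (U i)).trans <|
      by simpa using hscale i
  have hcost : ∀ i, ediam (U i) ^ t * ((2⁻¹ : ℝ≥0∞) ^ scale i) ^ s ≤
      2 ^ s * ediam (U i) ^ (s + t) := by
    intro i
    rcases eq_or_ne (ediam (U i)) 0 with h0 | h0
    · simp [h0, ENNReal.zero_rpow_of_pos ht]
    have hfin : ediam (U i) ≠ ∞ := ne_top_of_le_ne_top (by simp) (hscale i)
    calc ediam (U i) ^ t * ((2⁻¹ : ℝ≥0∞) ^ scale i) ^ s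
        ≤ ediam (U i) ^ t * (2 * ediam (U i)) ^ s := by gcongr; exact hscale' i h0
      _ = 2 ^ s * ediam (U i) ^ (s + t) := by
        rw [ENNReal.mul_rpow_of_nonneg _ _ hs, ENNReal.rpow_add _ _ h0 hfin]; ring
  calc ∑' k, ∑' z, dyadicCoverWeight U scale t k z * (2⁻¹ ^ k) ^ s
      = ∑' i, ∑' k, ∑' z, (if scale i = k ∧ z ∈ dyadicIndex k '' (Prod.fst '' U i)
          then ediam (U i) ^ t else 0) * ((2⁻¹ : ℝ≥0∞) ^ k) ^ s := by
        simp_rw [dyadicCoverWeight, ← ENNReal.tsum_mul_right]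
        exact (tsum_congr fun k => ENNReal.tsum_comm).trans ENNReal.tsum_comm
    _ = ∑' i, (A i).encard * (ediam (U i) ^ t * ((2⁻¹ : ℝ≥0∞) ^ scale i) ^ s) := by
        refine tsum_congr fun i => ?_
        rw [tsum_eq_single (scale i) fun k hk => by simp [Ne.symm hk], ← ENNReal.tsum_set_const,
          tsum_subtype (A i) fun _ => ediam (U i) ^ t * ((2⁻¹ : ℝ≥0∞) ^ scale i) ^ s]
        refine tsum_congr fun z => ?_
        by_cases hz : z ∈ A i <;> simp [A, hz, indicator]
    _ ≤ ∑' i, 3 ^ Fintype.card ι * (2 ^ s * ediam (U i) ^ (s + t)) :=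
        ENNReal.tsum_le_tsum fun i => mul_le_mul' (by exact_mod_cast hA i) (hcost i)
    _ = 3 ^ Fintype.card ι * 2 ^ s * ∑' i, ediam (U i) ^ (s + t) := by
        rw [ENNReal.tsum_mul_left, ENNReal.tsum_mul_left, mul_assoc]

end CoverWeight

section Slicing

variable {ι Y : Type*} [Fintype ι] [EMetricSpace Y]

theorem le_dimH_of_le_hausdorffContent_slice {C : Set (EuclideanSpace ℝ ι × Y)}
    {S : Set (EuclideanSpace ℝ ι)} {s s' t : ℝ} (hs : 0 ≤ s) (hss' : s < s') (ht : 0 < t)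
    (hS : hausdorffContent s' S ≠ 0) {b : ℝ≥0∞} (hb0 : b ≠ 0) (hbt : b ≠ ∞)
    (hslice : ∀ a ∈ S, b ≤ hausdorffContent t {y | (a, y) ∈ C}) :
    ENNReal.ofReal (s + t) ≤ dimH C := by
  borelize (EuclideanSpace ℝ ι × Y)
  obtain ⟨K, hK, hcontent⟩ := exists_hausdorffContent_le_tsum_dyadic_weight (ι := ι) hs hss'
  set L := K * b⁻¹ * (3 ^ Fintype.card ι * 2 ^ s)
  have hL : L ≠ ∞ := ENNReal.mul_ne_top (ENNReal.mul_ne_top hK (ENNReal.inv_ne_top.2 hb0))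
    (ENNReal.mul_ne_top (by simp) (ENNReal.rpow_ne_top_of_nonneg hs (by simp)))
  have hμ : hausdorffContent s' S / L ≤ μH[s + t] C := by
    refine le_hausdorffMeasure_of_forall_covers (by linarith) fun U hCU hU => ?_
    choose scale hscale hscale' using fun i => ENNReal.exists_inv_two_pow_near (hU i)
    have hw : ∀ a ∈ S, 1 ≤ ∑' k, b⁻¹ * dyadicCoverWeight U scale t k (dyadicIndex k a) := by
      intro a ha
      rw [ENNReal.tsum_mul_left, ← ENNReal.inv_mul_cancel hb0 hbt]
      gcongr
      exact (hslice a ha).trans (hausdorffContent_slice_le_tsum_dyadicCoverWeight hCU scale ht a)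
    refine ENNReal.div_le_of_le_mul ?_
    calc hausdorffContent s' S
        ≤ K * ∑' k, ∑' z, b⁻¹ * dyadicCoverWeight U scale t k z * (2⁻¹ ^ k) ^ s := hcontent S _ hw
      _ = K * b⁻¹ * ∑' k, ∑' z, dyadicCoverWeight U scale t k z * (2⁻¹ ^ k) ^ s := by
        simp_rw [mul_assoc, ENNReal.tsum_mul_left]
      _ ≤ K * b⁻¹ * (3 ^ Fintype.card ι * 2 ^ s * ∑' i, ediam (U i) ^ (s + t)) := by
        gcongr
        exact tsum_dyadicCoverWeight_le hs ht hscale hscale'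
      _ = (∑' i, ediam (U i) ^ (s + t)) * L := by ring
  have hμ0 : μH[(s + t).toNNReal] C ≠ 0 := by
    rw [Real.coe_toNNReal _ (by linarith)]
    exact ne_bot_of_le_ne_bot (ENNReal.div_pos hS hL).ne' hμ
  exact le_dimH_of_hausdorffMeasure_ne_zero hμ0

theorem le_dimH_of_lt_dimH_fst_image {C : Set (EuclideanSpace ℝ ι × Y)} {s t : ℝ} (hs : 0 ≤ s)
    (ht : 0 < t) (hproj : ENNReal.ofReal s < dimH (Prod.fst '' C))
    (hslice : ∀ a ∈ Prod.fst '' C, ENNReal.ofReal t < dimH {y | (a, y) ∈ C}) :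
    ENNReal.ofReal (s + t) ≤ dimH C := by
  obtain ⟨s', -, hss', hs'C⟩ := ENNReal.lt_iff_exists_real_btwn.1 hproj
  rw [ENNReal.ofReal_lt_ofReal_iff'] at hss'
  set S : ℕ → Set (EuclideanSpace ℝ ι) := fun n =>
    {a | (n : ℝ≥0∞)⁻¹ < hausdorffContent t {y | (a, y) ∈ C}}
  have hcover : Prod.fst '' C ⊆ ⋃ n, S n := fun a ha =>
    mem_iUnion.2 (ENNReal.exists_inv_nat_lt (hausdorffContent_ne_zero_of_lt_dimH ht (hslice a ha)))
  obtain ⟨n, hn⟩ : ∃ n, hausdorffContent s' (S n) ≠ 0 := by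
    by_contra! h
    exact hausdorffContent_ne_zero_of_lt_dimH (hs.trans_lt hss'.1) hs'C
      (measure_mono_null hcover (measure_iUnion_null h))
  -- `S 0` is empty, since `(0 : ℝ≥0∞)⁻¹ = ∞`
  have hn0 : n ≠ 0 := by
    rintro rfl
    simp [S] at hn
  exact le_dimH_of_le_hausdorffContent_slice hs hss'.1 ht hn (by simp) (by simpa using hn0)
    fun a ha => ha.le

end Slicing

/-- **Marstrand slicing theorem.** If `C ⊆ ℝ^m × ℝ^l`, the projection of `C`
to the first factor has Hausdorff dimension at least `α > 0`, and every slice of `C` over a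
point of the projection has Hausdorff dimension at least `β > 0`, then
`dim_H C ≥ α + β`. -/
theorem stmt_5 (m l : ℕ)
    (C : Set (EuclideanSpace ℝ (Fin m) × EuclideanSpace ℝ (Fin l)))
    (α β : ℝ) (hα : 0 < α) (hβ : 0 < β)
    (hproj : ENNReal.ofReal α ≤ dimH (Prod.fst '' C))
    (hslice : ∀ a ∈ Prod.fst '' C, ENNReal.ofReal β ≤ dimH {b | (a, b) ∈ C}) :
    ENNReal.ofReal (α + β) ≤ dimH C := by
  refine ENNReal.le_of_forall_lt_one_mul_le fun q hq => ?_
  rcases eq_or_ne q 0 with rfl | hq0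
  · simp
  have hqt : q ≠ ∞ := ne_top_of_lt (hq.trans ENNReal.one_lt_top)
  have hq' : 0 < q.toReal ∧ q.toReal < 1 := ⟨ENNReal.toReal_pos hq0 hqt,
    by simpa using (ENNReal.toReal_lt_toReal hqt ENNReal.one_ne_top).2 hq⟩
  have hlt : ∀ γ : ℝ, 0 < γ → ENNReal.ofReal (q.toReal * γ) < ENNReal.ofReal γ := fun γ hγ =>
    (ENNReal.ofReal_lt_ofReal_iff hγ).2 (mul_lt_of_lt_one_left hγ hq'.2)
  rw [← ENNReal.ofReal_toReal hqt, ← ENNReal.ofReal_mul hq'.1.le, mul_add]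
  exact le_dimH_of_lt_dimH_fst_image (by positivity) (mul_pos hq'.1 hβ)
    ((hlt α hα).trans_le hproj) fun a ha => (hlt β hβ).trans_le (hslice a ha)
end

section
/- Let (ℬ, J, ϱ) be an indexed self-similar covering of a subset E ⊆ ℝ^l, and suppose there exists s > 0 such that for every α ∈ J one has Σ_{α' ∈ ϱ(α)} (diam B(α'))^s ≤ (diam B(α))^s. Then dim_H(E) ≤ s. -/
open scoped ENNReal
open Filter Topology MeasureTheory Metric Set

/-!
Sort the points of `E` by the first index `r` of their chains. Given `δ > 0`, stop every
`ϱ`-path from `r` at the first index whose set has diameter `< δ`. Iterating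
`∑_{ϱ(α)} (diam B)^s ≤ (diam B(α))^s` down this stopping tree bounds the `s`-sums of the
stopped sets by `(diam B(r))^s`, and the geometric decay along the chains makes the stopped
sets cover all points rooted at `r` once `δ = λⁿ (diam B(r) + 1)` and paths are cut at
length `n`. So every class has finite `s`-dimensional Hausdorff measure, and `E` is a
countable union of classes.
-/

section FirstHits

variable {J : Type*} (ϱ : J → Set J) (P : J → Prop)

open Classical in
noncomputable def firstHits : ℕ → J → Set J
  | 0, α => if P α then {α} else ∅
  | n + 1, α => if P α then {α} else ⋃ β ∈ ϱ α, firstHits n β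

variable {ϱ P} {α : J}

theorem firstHits_of_pos (h : P α) (n : ℕ) : firstHits ϱ P n α = {α} := by
  cases n <;> simp [firstHits, h]

theorem firstHits_zero_of_neg (h : ¬P α) : firstHits ϱ P 0 α = ∅ := by
  simp [firstHits, h]

theorem firstHits_succ_of_neg (h : ¬P α) (n : ℕ) :
    firstHits ϱ P (n + 1) α = ⋃ β ∈ ϱ α, firstHits ϱ P n β := by
  simp [firstHits, h]

theorem prop_of_mem_firstHits {n : ℕ} {γ : J} (hγ : γ ∈ firstHits ϱ P n α) : P γ := by
  induction n generalizing α with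
  | zero =>
    by_cases h : P α
    · rwa [firstHits_of_pos h, mem_singleton_iff.1 hγ] at *
    · simp [firstHits_zero_of_neg h] at hγ
  | succ n ih =>
    by_cases h : P α
    · rwa [firstHits_of_pos h, mem_singleton_iff.1 hγ] at *
    · rw [firstHits_succ_of_neg h, mem_iUnion₂] at hγ
      obtain ⟨β, -, hβ⟩ := hγ
      exact ih hβ

theorem tsum_firstHits_le {f : J → ℝ≥0∞} (hf : ∀ α, ∑' β : ϱ α, f β ≤ f α) (n : ℕ) (α : J) :
    ∑' γ : firstHits ϱ P n α, f γ ≤ f α := by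
  induction n generalizing α with
  | zero =>
    by_cases h : P α
    · rw [firstHits_of_pos h, tsum_singleton]
    · simp [firstHits_zero_of_neg h]
  | succ n ih =>
    by_cases h : P α
    · rw [firstHits_of_pos h, tsum_singleton]
    calc ∑' γ : firstHits ϱ P (n + 1) α, f γ
        = ∑' γ : ⋃ β ∈ ϱ α, firstHits ϱ P n β, f γ := by rw [firstHits_succ_of_neg h]
      _ ≤ ∑' β : ϱ α, ∑' γ : firstHits ϱ P n β, f γ := ENNReal.tsum_biUnion_le_tsum f _ _
      _ ≤ ∑' β : ϱ α, f β := ENNReal.tsum_le_tsum fun β => ih β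
      _ ≤ f α := hf α

theorem exists_mem_firstHits {n : ℕ} {a : ℕ → J} (ha : ∀ j, a (j + 1) ∈ ϱ (a j))
    (hP : P (a n)) : ∃ k, a k ∈ firstHits ϱ P n (a 0) := by
  induction n generalizing a with
  | zero => exact ⟨0, by rw [firstHits_of_pos hP]; rfl⟩
  | succ n ih =>
    by_cases h : P (a 0)
    · exact ⟨0, by rw [firstHits_of_pos h]; rfl⟩
    obtain ⟨k, hk⟩ := ih (a := fun j => a (j + 1)) (fun j => ha (j + 1)) hP
    refine ⟨k + 1, ?_⟩
    rw [firstHits_succ_of_neg h]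
    exact mem_iUnion₂.2 ⟨a 1, ha 0, hk⟩

end FirstHits

theorem Bornology.IsBounded.ediam_eq_ofReal_diam {X : Type*} [PseudoMetricSpace X] {s : Set X}
    (h : Bornology.IsBounded s) : ediam s = ENNReal.ofReal (diam s) :=
  (ENNReal.ofReal_toReal h.ediam_ne_top).symm

section Chains

variable {X J : Type*} [MetricSpace X] [MeasurableSpace X] [BorelSpace X] [Countable J]
  {B : J → Set X} {ϱ : J → Set J} {s : ℝ} {δ : ℕ → ℝ} {r : J} {S : Set X}

theorem hausdorffMeasure_le_of_chains (hB : ∀ a, Bornology.IsBounded (B a)) (hs : 0 ≤ s)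
    (hsum : ∀ a, ∑' b : ϱ a, ENNReal.ofReal (diam (B b) ^ s) ≤ ENNReal.ofReal (diam (B a) ^ s))
    (hδ : Tendsto δ atTop (𝓝 0))
    (hS : ∀ x ∈ S, ∃ a : ℕ → J, a 0 = r ∧ (∀ j, a (j + 1) ∈ ϱ (a j)) ∧ (∀ j, x ∈ B (a j)) ∧
      ∀ n, diam (B (a n)) < δ n) :
    μH[s] S ≤ ENNReal.ofReal (diam (B r) ^ s) := by
  have hpow : ∀ a, ediam (B a) ^ s = ENNReal.ofReal (diam (B a) ^ s) := fun a => by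
    rw [(hB a).ediam_eq_ofReal_diam, ENNReal.ofReal_rpow_of_nonneg diam_nonneg hs]
  let cut (n : ℕ) : Set J := firstHits ϱ (fun a => diam (B a) < δ n) n r
  have hδ' : Tendsto (fun n => ENNReal.ofReal (δ n)) atTop (𝓝 0) := by
    simpa using ENNReal.tendsto_ofReal hδ
  have hsmall : ∀ n (γ : cut n), ediam (B γ) ≤ ENNReal.ofReal (δ n) := fun n γ => by
    rw [(hB γ).ediam_eq_ofReal_diam]
    exact ENNReal.ofReal_le_ofReal (prop_of_mem_firstHits γ.2).le
  have hcover : ∀ n, S ⊆ ⋃ γ : cut n, B γ := by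
    rintro n x hx
    obtain ⟨a, rfl, ha, hxa, hdiam⟩ := hS x hx
    obtain ⟨k, hk⟩ := exists_mem_firstHits (P := fun a => diam (B a) < δ n) ha (hdiam n)
    exact mem_iUnion.2 ⟨⟨a k, hk⟩, hxa k⟩
  calc μH[s] S ≤ liminf (fun n => ∑' γ : cut n, ediam (B γ) ^ s) atTop :=
        Measure.hausdorffMeasure_le_liminf_tsum s S _ hδ' (fun n (γ : cut n) => B γ)
          (Eventually.of_forall hsmall) (Eventually.of_forall hcover)
    _ ≤ liminf (fun _ => ENNReal.ofReal (diam (B r) ^ s)) atTop := by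
        refine liminf_le_liminf (Eventually.of_forall fun n => ?_)
        simp only [hpow]
        exact tsum_firstHits_le hsum n r
    _ = ENNReal.ofReal (diam (B r) ^ s) := liminf_const _

theorem dimH_le_of_chains (hB : ∀ a, Bornology.IsBounded (B a)) (hs : 0 ≤ s)
    (hsum : ∀ a, ∑' b : ϱ a, ENNReal.ofReal (diam (B b) ^ s) ≤ ENNReal.ofReal (diam (B a) ^ s))
    (hδ : Tendsto δ atTop (𝓝 0))
    (hS : ∀ x ∈ S, ∃ a : ℕ → J, a 0 = r ∧ (∀ j, a (j + 1) ∈ ϱ (a j)) ∧ (∀ j, x ∈ B (a j)) ∧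
      ∀ n, diam (B (a n)) < δ n) :
    dimH S ≤ ENNReal.ofReal s := by
  refine dimH_le_of_hausdorffMeasure_ne_top
    (ne_top_of_le_ne_top (b := ENNReal.ofReal (diam (B r) ^ s)) ENNReal.ofReal_ne_top ?_)
  rw [Real.coe_toNNReal s hs]
  exact hausdorffMeasure_le_of_chains hB hs hsum hδ hS

end Chains

theorem stmt_6_general (l : ℕ) (E : Set (EuclideanSpace ℝ (Fin l)))
    (J : Type) [Countable J]
    (B : J → Set (EuclideanSpace ℝ (Fin l)))
    (hBbdd : ∀ a : J, Bornology.IsBounded (B a))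
    (ϱ : J → Set J)
    (lam : ℝ) (hlam0 : 0 < lam) (hlam1 : lam < 1)
    (hss : ∀ x ∈ E, ∃ a : ℕ → J,
      (⋂ j : ℕ, B (a j)) = {x} ∧
      (∀ j : ℕ, Metric.diam (B (a (j + 1))) < lam * Metric.diam (B (a j))) ∧
      (∀ j : ℕ, a (j + 1) ∈ ϱ (a j)))
    (s : ℝ) (hs : 0 < s)
    (hsum : ∀ a : J, ∑' b : (ϱ a), ENNReal.ofReal (Metric.diam (B (b : J)) ^ s)
        ≤ ENNReal.ofReal (Metric.diam (B a) ^ s)) :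
    dimH E ≤ ENNReal.ofReal s := by
  choose g hgx hgdiam hgϱ using hss
  have hmem : ∀ x (hx : x ∈ E) j, x ∈ B (g x hx j) := fun x hx j =>
    mem_iInter.1 ((hgx x hx).symm ▸ mem_singleton x) j
  have hroots : E ⊆ ⋃ r, {x | ∃ hx : x ∈ E, g x hx 0 = r} := fun x hx =>
    mem_iUnion.2 ⟨g x hx 0, hx, rfl⟩
  refine (dimH_mono hroots).trans ((dimH_iUnion _).trans_le (iSup_le fun r => ?_))
  have hδ : Tendsto (fun n => lam ^ n * (diam (B r) + 1)) atTop (𝓝 0) := by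
    simpa using (tendsto_pow_atTop_nhds_zero_of_lt_one hlam0.le hlam1).mul_const _
  refine dimH_le_of_chains (r := r) hBbdd hs.le hsum hδ ?_
  rintro x ⟨hx, rfl⟩
  refine ⟨g x hx, rfl, hgϱ x hx, hmem x hx, fun n => ?_⟩
  calc diam (B (g x hx n)) ≤ lam ^ n * diam (B (g x hx 0)) :=
        le_geom (u := fun j => diam (B (g x hx j))) hlam0.le n fun k _ => (hgdiam x hx k).le
    _ < lam ^ n * (diam (B (g x hx 0)) + 1) := by gcongr; linarith

/-- If `(ℬ, J, ϱ)` is an indexed self-similar covering of `E ⊆ ℝ^l` and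
there is an `s > 0` with `∑_{α' ∈ ϱ(α)} (diam B(α'))^s ≤ (diam B(α))^s` for every `α ∈ J`,
then `dim_H E ≤ s`. -/
theorem stmt_6 (l : ℕ) (E : Set (EuclideanSpace ℝ (Fin l)))
    (J : Type) [Countable J]
    (B : J → Set (EuclideanSpace ℝ (Fin l)))
    (hBbdd : ∀ a : J, Bornology.IsBounded (B a))
    (hBne : ∀ a : J, (B a).Nonempty)
    (hcov : E ⊆ ⋃ a : J, B a)
    (ϱ : J → Set J) (hϱ : ∀ a : J, (ϱ a).Nonempty)
    (lam : ℝ) (hlam0 : 0 < lam) (hlam1 : lam < 1)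
    (hss : ∀ x ∈ E, ∃ a : ℕ → J,
      (⋂ j : ℕ, B (a j)) = {x} ∧
      (∀ j : ℕ, Metric.diam (B (a (j + 1))) < lam * Metric.diam (B (a j))) ∧
      (∀ j : ℕ, a (j + 1) ∈ ϱ (a j)))
    (s : ℝ) (hs : 0 < s)
    (hsum : ∀ a : J, ∑' b : (ϱ a), ENNReal.ofReal (Metric.diam (B (b : J)) ^ s)
        ≤ ENNReal.ofReal (Metric.diam (B a) ^ s)) :
    dimH E ≤ ENNReal.ofReal s :=
  stmt_6_general l E J B hBbdd ϱ lam hlam0 hlam1 hss s hs hsum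
end

section
/- Let d ≥ 1, c > 0, X ≥ 1 and ρ > 0. Let B be a closed Euclidean ball of radius ρ in ℝ^d, let S ⊆ B be a finite set, and let h : S → ℝ satisfy 1 ≤ h(a) ≤ X for every a ∈ S. Assume the separation condition: for all distinct a, b ∈ S, dist(a,b) ≥ c / √(h(a)·h(b)). Then Σ_{a ∈ S} h(a)^{−d/2} ≤ (2/c)^d · (ρ + c/2)^d · X^{d/2}. -/
/-!
Give each point `a` the ball of radius `c / (2 √(X h(a)))`. Since `h(b) ≤ X`, the radii of two
such balls add up to at most `c / √(h(a) h(b)) ≤ dist(a, b)`, so the balls are pairwise disjoint;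
they have radius at most `c / 2`, so they lie in the ball of radius `ρ + c / 2` about the centre
of `B`. Comparing Lebesgue measures gives `∑ (c / (2 √(X h(a))))^d ≤ (ρ + c / 2)^d`, which is the
claim after multiplying by `(2 / c)^d X^{d/2}`.
-/

open MeasureTheory Metric Module Finset

section Packing

variable {E : Type*} [NormedAddCommGroup E] [NormedSpace ℝ E] [MeasurableSpace E] [BorelSpace E]
  [FiniteDimensional ℝ E]

theorem sum_pow_finrank_le_of_pairwiseDisjoint_ball (μ : Measure E) [μ.IsAddHaarMeasure]
    (S : Finset E) (r : E → ℝ) (x₀ : E) {R : ℝ} (hr : ∀ a ∈ S, 0 < r a) (hR : 0 < R)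
    (hdisj : (S : Set E).PairwiseDisjoint fun a => ball a (r a))
    (hsub : ∀ a ∈ S, ball a (r a) ⊆ ball x₀ R) :
    ∑ a ∈ S, r a ^ finrank ℝ E ≤ R ^ finrank ℝ E := by
  have hunit : μ (ball 0 1) ≠ 0 := (measure_ball_pos μ 0 one_pos).ne'
  have hvol : ∑ a ∈ S, μ (ball a (r a)) ≤ μ (ball x₀ R) := by
    rw [← measure_biUnion_finset hdisj fun a _ => measurableSet_ball]
    exact measure_mono (Set.iUnion₂_subset hsub)
  rw [← ENNReal.ofReal_le_ofReal_iff (by positivity),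
    ENNReal.ofReal_sum_of_nonneg fun a ha => by have := hr a ha; positivity,
    ← ENNReal.mul_le_mul_iff_left hunit measure_ball_lt_top.ne, sum_mul,
    ← Measure.addHaar_ball_of_pos μ x₀ hR]
  calc ∑ a ∈ S, ENNReal.ofReal (r a ^ finrank ℝ E) * μ (ball 0 1)
      = ∑ a ∈ S, μ (ball a (r a)) :=
        sum_congr rfl fun a ha => (Measure.addHaar_ball_of_pos μ a (hr a ha)).symm
    _ ≤ μ (ball x₀ R) := hvol

end Packing

section PackingRadius

open Real

noncomputable def packingRadius (c X t : ℝ) : ℝ := c / (2 * √(X * t))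

variable {c X : ℝ}

theorem packingRadius_pos (hc : 0 < c) (hX : 0 < X) {t : ℝ} (ht : 0 < t) :
    0 < packingRadius c X t := by
  unfold packingRadius
  positivity

theorem packingRadius_le_half (hc : 0 ≤ c) {t : ℝ} (ht : 1 ≤ X * t) :
    packingRadius c X t ≤ c / 2 := by
  unfold packingRadius
  have : 1 ≤ √(X * t) := one_le_sqrt.mpr ht
  gcongr
  linarith

theorem packingRadius_add_le (hc : 0 ≤ c) {s t : ℝ} (hs : 0 < s) (ht : 0 < t)
    (hsX : s ≤ X) (htX : t ≤ X) :
    packingRadius c X s + packingRadius c X t ≤ c / √(s * t) := by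
  have hle : ∀ {u v : ℝ}, 0 < u → 0 < v → v ≤ X →
      packingRadius c X u ≤ c / (2 * √(u * v)) := fun hu hv hvX => by
    unfold packingRadius
    gcongr c / (2 * √?_)
    nlinarith
  calc packingRadius c X s + packingRadius c X t
      ≤ c / (2 * √(s * t)) + c / (2 * √(t * s)) := add_le_add (hle hs ht htX) (hle ht hs hsX)
    _ = c / √(s * t) := by rw [mul_comm t s]; field_simp; ring

theorem rpow_neg_half_eq_mul_packingRadius_pow (hc : c ≠ 0) (hX : 0 < X) {t : ℝ} (ht : 0 < t)
    (d : ℕ) :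
    t ^ (-(d : ℝ) / 2) = (2 / c) ^ d * X ^ ((d : ℝ) / 2) * packingRadius c X t ^ d := by
  rw [neg_div, rpow_neg ht.le, rpow_div_two_eq_sqrt _ ht.le, rpow_div_two_eq_sqrt _ hX.le,
    rpow_natCast, rpow_natCast, packingRadius, sqrt_mul hX.le, ← inv_pow, ← mul_pow, ← mul_pow]
  congr 1
  field_simp

end PackingRadius

theorem stmt_7_general (d : ℕ) (c X ρ : ℝ) (hc : 0 < c) (hX : 1 ≤ X) (hρ : 0 < ρ)
    (x₀ : EuclideanSpace ℝ (Fin d)) (S : Finset (EuclideanSpace ℝ (Fin d)))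
    (hS : ∀ a ∈ S, a ∈ Metric.closedBall x₀ ρ)
    (h : EuclideanSpace ℝ (Fin d) → ℝ)
    (hh1 : ∀ a ∈ S, 1 ≤ h a) (hhX : ∀ a ∈ S, h a ≤ X)
    (hsep : ∀ a ∈ S, ∀ b ∈ S, a ≠ b → c / Real.sqrt (h a * h b) ≤ dist a b) :
    ∑ a ∈ S, h a ^ (-(d : ℝ) / 2) ≤ (2 / c) ^ d * (ρ + c / 2) ^ d * X ^ ((d : ℝ) / 2) := by
  have hX0 : 0 < X := one_pos.trans_le hX
  have hpos : ∀ a ∈ S, 0 < h a := fun a ha => one_pos.trans_le (hh1 a ha)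
  have hdisj : (S : Set _).PairwiseDisjoint fun a => ball a (packingRadius c X (h a)) :=
    fun a ha b hb hab => ball_disjoint_ball <|
      (packingRadius_add_le hc.le (hpos a ha) (hpos b hb) (hhX a ha) (hhX b hb)).trans
        (hsep a ha b hb hab)
  have hsub : ∀ a ∈ S, ball a (packingRadius c X (h a)) ⊆ ball x₀ (ρ + c / 2) := fun a ha =>
    ball_subset_ball' <| by
      have := packingRadius_le_half hc.le (one_le_mul_of_one_le_of_one_le hX (hh1 a ha))
      linarith [mem_closedBall.mp (hS a ha)]
  have hpack := sum_pow_finrank_le_of_pairwiseDisjoint_ball volume S _ x₀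
    (fun a ha => packingRadius_pos hc hX0 (hpos a ha)) (by positivity) hdisj hsub
  rw [finrank_euclideanSpace_fin] at hpack
  calc ∑ a ∈ S, h a ^ (-(d : ℝ) / 2)
      = (2 / c) ^ d * X ^ ((d : ℝ) / 2) * ∑ a ∈ S, packingRadius c X (h a) ^ d := by
        rw [mul_sum]
        exact sum_congr rfl fun a ha =>
          rpow_neg_half_eq_mul_packingRadius_pow hc.ne' hX0 (hpos a ha) d
    _ ≤ (2 / c) ^ d * X ^ ((d : ℝ) / 2) * (ρ + c / 2) ^ d := by gcongr
    _ = (2 / c) ^ d * (ρ + c / 2) ^ d * X ^ ((d : ℝ) / 2) := by ring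

/-- Packing estimate: if `S` is a finite set of points in a closed ball of
radius `ρ` in `ℝ^d`, equipped with heights `1 ≤ h a ≤ X`, and any two distinct points of `S`
satisfy `dist a b ≥ c / √(h a · h b)`, then `∑_{a ∈ S} h(a)^{-d/2} ≤ (2/c)^d (ρ + c/2)^d X^{d/2}`. -/
theorem stmt_7 (d : ℕ) (hd : 1 ≤ d) (c X ρ : ℝ) (hc : 0 < c) (hX : 1 ≤ X) (hρ : 0 < ρ)
    (x₀ : EuclideanSpace ℝ (Fin d)) (S : Finset (EuclideanSpace ℝ (Fin d)))
    (hS : ∀ a ∈ S, a ∈ Metric.closedBall x₀ ρ)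
    (h : EuclideanSpace ℝ (Fin d) → ℝ)
    (hh1 : ∀ a ∈ S, 1 ≤ h a) (hhX : ∀ a ∈ S, h a ≤ X)
    (hsep : ∀ a ∈ S, ∀ b ∈ S, a ≠ b → c / Real.sqrt (h a * h b) ≤ dist a b) :
    ∑ a ∈ S, h a ^ (-(d : ℝ) / 2) ≤ (2 / c) ^ d * (ρ + c / 2) ^ d * X ^ ((d : ℝ) / 2) :=
  stmt_7_general d c X ρ hc hX hρ x₀ S hS h hh1 hhX hsep
end
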